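/- arXiv:1702.01337 — 2 statements merged into one kernel-verified Lean document; each statement's English description precedes it below -/
import Mathlib

section
/- Let i : B → A be a k-linear X-functor from a diagonal k-linear category B to a k-linear category A. Then there is an adjoint pair of functors (F, G) between the category D_k(X)_B of diagonal right B-modules and the category Desc_B(A) of descent data for i, where F(N)_{xy} = N_x ⊗_{B_x} A_{xy} with right A-action (n ⊗ a)b = n ⊗ ab and descent map σ_{xy}(n ⊗ a) = n ⊗ 1_x ⊗ a, where G(M)_x = {m ∈ M_{xx} | σ_{xx}(m) = m ⊗_{B_x} 1_x}, and where the unit is η^N_x : N_x → GF(N)_x, n ↦ n ⊗_{B_x} 1_x, and the counit is ε^M_{xy} : G(M)_x ⊗_{B_x} A_{xy} → M_{xy}, m ⊗ a ↦ ma. -/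
open TensorProduct BigOperators
noncomputable section
namespace Paper
variable (k : Type) [CommRing k]

-- [CORE assumed]
structure KCat (X : Type) where
  M : X → X → Type
  [acg : ∀ x y, AddCommGroup (M x y)]
  [mod : ∀ x y, Module k (M x y)]
  mul : ∀ {x y z : X}, M x y → M y z → M x z
  one : ∀ x : X, M x x
  add_mul : ∀ {x y z : X} (a a' : M x y) (b : M y z), mul (a + a') b = mul a b + mul a' b
  smul_mul : ∀ {x y z : X} (c : k) (a : M x y) (b : M y z), mul (c • a) b = c • mul a b
  mul_add : ∀ {x y z : X} (a : M x y) (b b' : M y z), mul a (b + b') = mul a b + mul a b'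
  mul_smul : ∀ {x y z : X} (c : k) (a : M x y) (b : M y z), mul a (c • b) = c • mul a b
  mul_assoc : ∀ {x y z w : X} (a : M x y) (b : M y z) (c : M z w),
    mul (mul a b) c = mul a (mul b c)
  one_mul : ∀ {x y : X} (a : M x y), mul (one x) a = a
  mul_one : ∀ {x y : X} (a : M x y), mul a (one y) = a
attribute [instance] KCat.acg KCat.mod
variable {k}
def KCat.mulLin {X : Type} (A : KCat k X) (x y z : X) :
    A.M x y →ₗ[k] A.M y z →ₗ[k] A.M x z :=
  LinearMap.mk₂ k A.mul A.add_mul A.smul_mul A.mul_add A.mul_smul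
@[simp] theorem KCat.mulLin_apply {X : Type} (A : KCat k X) (x y z : X)
    (a : A.M x y) (b : A.M y z) : A.mulLin x y z a b = A.mul a b := rfl
variable (k)
def relSub {S M N : Type} [AddCommGroup M] [Module k M] [AddCommGroup N] [Module k N]
    (ρ : M → S → M) (lam : S → N → N) : Submodule k (M ⊗[k] N) :=
  Submodule.span k {t | ∃ m b n, t = ρ m b ⊗ₜ[k] n - m ⊗ₜ[k] lam b n}
abbrev BT {S M N : Type} [AddCommGroup M] [Module k M] [AddCommGroup N] [Module k N]
    (ρ : M → S → M) (lam : S → N → N) : Type :=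
  (M ⊗[k] N) ⧸ relSub k ρ lam
def btmk {S M N : Type} [AddCommGroup M] [Module k M] [AddCommGroup N] [Module k N]
    (ρ : M → S → M) (lam : S → N → N) : M →ₗ[k] N →ₗ[k] BT k ρ lam :=
  (TensorProduct.mk k M N).compr₂ (relSub k ρ lam).mkQ
theorem btmk_rel {S M N : Type} [AddCommGroup M] [Module k M] [AddCommGroup N] [Module k N]
    (ρ : M → S → M) (lam : S → N → N) (m : M) (b : S) (n : N) :
    btmk k ρ lam (ρ m b) n = btmk k ρ lam m (lam b n) := by
  show (relSub k ρ lam).mkQ _ = (relSub k ρ lam).mkQ _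
  rw [Submodule.mkQ_apply, Submodule.mkQ_apply, Submodule.Quotient.eq]
  exact Submodule.subset_span ⟨m, b, n, rfl⟩
def btDesc {S M N P : Type} [AddCommGroup M] [Module k M] [AddCommGroup N] [Module k N]
    [AddCommGroup P] [Module k P]
    (ρ : M → S → M) (lam : S → N → N) (f : M →ₗ[k] N →ₗ[k] P)
    (hf : ∀ m b n, f (ρ m b) n = f m (lam b n)) :
    BT k ρ lam →ₗ[k] P :=
  Submodule.liftQ _ (TensorProduct.lift f) (by
    rw [relSub, Submodule.span_le]
    rintro t ⟨m, b, n, rfl⟩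
    simp [SetLike.mem_coe, LinearMap.mem_ker, map_sub, hf m b n])
@[simp] theorem btDesc_mk {S M N P : Type} [AddCommGroup M] [Module k M] [AddCommGroup N]
    [Module k N] [AddCommGroup P] [Module k P]
    (ρ : M → S → M) (lam : S → N → N) (f : M →ₗ[k] N →ₗ[k] P)
    (hf : ∀ m b n, f (ρ m b) n = f m (lam b n)) (m : M) (n : N) :
    btDesc k ρ lam f hf (btmk k ρ lam m n) = f m n := by
  simp [btDesc, btmk, LinearMap.compr₂_apply, TensorProduct.mk_apply]
-- [END CORE]

/-- A diagonal `k`-linear category: a family of (not necessarily commutative,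
associative, unital) `k`-algebras indexed by `X`. -/
structure DiagAlg (X : Type) where
  C : X → Type
  [acg : ∀ x, AddCommGroup (C x)]
  [mod : ∀ x, Module k (C x)]
  mul : ∀ {x : X}, C x → C x → C x
  one : ∀ x : X, C x
  add_mul : ∀ {x : X} (a a' b : C x), mul (a + a') b = mul a b + mul a' b
  smul_mul : ∀ {x : X} (c : k) (a b : C x), mul (c • a) b = c • mul a b
  mul_add : ∀ {x : X} (a b b' : C x), mul a (b + b') = mul a b + mul a b'
  mul_smul : ∀ {x : X} (c : k) (a b : C x), mul a (c • b) = c • mul a b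
  mul_assoc : ∀ {x : X} (a b c : C x), mul (mul a b) c = mul a (mul b c)
  one_mul : ∀ {x : X} (a : C x), mul (one x) a = a
  mul_one : ∀ {x : X} (a : C x), mul a (one x) = a

attribute [instance] DiagAlg.acg DiagAlg.mod

variable {k}

/-- A `k`-linear `X`-functor from a diagonal category `B` to `A`: a family of
`k`-algebra maps `i x : B x → A x x`. -/
structure XFun {X : Type} (B : DiagAlg k X) (A : KCat k X) where
  i : ∀ x, B.C x →ₗ[k] A.M x x
  i_mul : ∀ x (b b' : B.C x), i x (B.mul b b') = A.mul (i x b) (i x b')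
  i_one : ∀ x, i x (B.one x) = A.one x

/-- A family of right `B_x`-modules (an object of `D_k(X)` with right `B`-action). -/
structure DModData {X : Type} (B : DiagAlg k X) where
  N : X → Type
  [acg : ∀ x, AddCommGroup (N x)]
  [mod : ∀ x, Module k (N x)]
  ract : ∀ {x : X}, N x → B.C x → N x

attribute [instance] DModData.acg DModData.mod

/-- The axioms making `Nd` an object of `D_k(X)_B`. -/
structure IsDMod {X : Type} {B : DiagAlg k X} (Nd : DModData B) : Prop where
  add_ract : ∀ {x : X} (n n' : Nd.N x) (b : B.C x), Nd.ract (n + n') b = Nd.ract n b + Nd.ract n' b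
  ract_add : ∀ {x : X} (n : Nd.N x) (b b' : B.C x), Nd.ract n (b + b') = Nd.ract n b + Nd.ract n b'
  smul_ract : ∀ {x : X} (c : k) (n : Nd.N x) (b : B.C x), Nd.ract (c • n) b = c • Nd.ract n b
  ract_smul : ∀ {x : X} (c : k) (n : Nd.N x) (b : B.C x), Nd.ract n (c • b) = c • Nd.ract n b
  ract_assoc : ∀ {x : X} (n : Nd.N x) (b b' : B.C x),
    Nd.ract (Nd.ract n b) b' = Nd.ract n (B.mul b b')
  ract_one : ∀ {x : X} (n : Nd.N x), Nd.ract n (B.one x) = n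

/-- Morphisms in `D_k(X)_B`. -/
structure IsDModHom {X : Type} {B : DiagAlg k X} (Nd Nd' : DModData B)
    (g : ∀ x, Nd.N x → Nd'.N x) : Prop where
  map_add : ∀ x (n n' : Nd.N x), g x (n + n') = g x n + g x n'
  map_smul : ∀ x (c : k) (n : Nd.N x), g x (c • n) = c • g x n
  map_ract : ∀ x (n : Nd.N x) (b : B.C x), g x (Nd.ract n b) = Nd'.ract (g x n) b

/-- A right module (in `M_k(X)`) over the `k`-linear category `A` (data only). -/
structure RModData {X : Type} (A : KCat k X) where
  M : X → X → Type
  [acg : ∀ x y, AddCommGroup (M x y)]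
  [mod : ∀ x y, Module k (M x y)]
  act : ∀ {x y z : X}, M x y → A.M y z → M x z

attribute [instance] RModData.acg RModData.mod

/-- The axioms of a right `A`-module. -/
structure IsRMod {X : Type} {A : KCat k X} (Md : RModData A) : Prop where
  add_act : ∀ {x y z : X} (m m' : Md.M x y) (a : A.M y z), Md.act (m + m') a = Md.act m a + Md.act m' a
  act_add : ∀ {x y z : X} (m : Md.M x y) (a a' : A.M y z), Md.act m (a + a') = Md.act m a + Md.act m a'
  smul_act : ∀ {x y z : X} (c : k) (m : Md.M x y) (a : A.M y z), Md.act (c • m) a = c • Md.act m a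
  act_smul : ∀ {x y z : X} (c : k) (m : Md.M x y) (a : A.M y z), Md.act m (c • a) = c • Md.act m a
  act_assoc : ∀ {x y z w : X} (m : Md.M x y) (a : A.M y z) (b : A.M z w),
    Md.act (Md.act m a) b = Md.act m (A.mul a b)
  act_one : ∀ {x y : X} (m : Md.M x y), Md.act m (A.one y) = m

/-- Morphisms of right `A`-modules. -/
structure IsRModHom {X : Type} {A : KCat k X} (Md Md' : RModData A)
    (f : ∀ x y, Md.M x y → Md'.M x y) : Prop where
  map_add : ∀ x y (m m' : Md.M x y), f x y (m + m') = f x y m + f x y m'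
  map_smul : ∀ x y (c : k) (m : Md.M x y), f x y (c • m) = c • f x y m
  map_act : ∀ x y z (m : Md.M x y) (a : A.M y z), f x z (Md.act m a) = Md'.act (f x y m) a

section Descent

variable {X : Type} (A : KCat k X) (B : DiagAlg k X) (F : XFun B A)

/-- `M_{xx} ⊗_{B_x} A_{xy}`, for a right `A`-module `M`, where `B` acts via `i = F.i`. -/
abbrev DTc (Md : RModData A) (x y : X) : Type :=
  BT k (fun (m : Md.M x x) (b : B.C x) => Md.act m (F.i x b))
       (fun (b : B.C x) (a : A.M x y) => A.mul (F.i x b) a)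

abbrev dtmk (Md : RModData A) (x y : X) :
    Md.M x x →ₗ[k] A.M x y →ₗ[k] DTc A B F Md x y :=
  btmk k _ _

/-- Right multiplication by `a : A_{yz}` on the second factor of `M_{xx} ⊗_{B_x} A_{xy}`. -/
def dtRmul (Md : RModData A) {x y z : X} (a : A.M y z) :
    DTc A B F Md x y →ₗ[k] DTc A B F Md x z :=
  btDesc k _ _ ((dtmk A B F Md x z).compl₂ ((A.mulLin x y z).flip a)) (by
    intro m b a'
    simp only [LinearMap.compl₂_apply, LinearMap.flip_apply, KCat.mulLin_apply]
    rw [A.mul_assoc]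
    exact btmk_rel k _ _ m b (A.mul a' a))

@[simp] theorem dtRmul_mk (Md : RModData A) {x y z : X} (a : A.M y z)
    (m : Md.M x x) (a' : A.M x y) :
    dtRmul A B F Md a (dtmk A B F Md x y m a') = dtmk A B F Md x z m (A.mul a' a) := by
  simp [dtRmul]

/-- `(M_{xx} ⊗_{B_x} A_{xx}) ⊗_{B_x} A_{xy}`. -/
abbrev DT2c (Md : RModData A) (x y : X) : Type :=
  BT k (fun (t : DTc A B F Md x x) (b : B.C x) => dtRmul A B F Md (F.i x b) t)
       (fun (b : B.C x) (a : A.M x y) => A.mul (F.i x b) a)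

abbrev dt2mk (Md : RModData A) (x y : X) :
    DTc A B F Md x x →ₗ[k] A.M x y →ₗ[k] DT2c A B F Md x y :=
  btmk k _ _

/-- A descent datum: a right `A`-module together with the maps `σ_{xy}`. -/
structure DescData where
  Md : RModData A
  sig : ∀ (x y : X), Md.M x y → DTc A B F Md x y

/-- The axioms of a descent datum.  The conditions `c2` and `c3` are expressed via
(arbitrary) representatives `σ_{xy}(m) = ∑ⱼ m0 j ⊗ m1 j` of the element `σ_{xy}(m)`
of the balanced tensor product. -/
structure IsDesc (D : DescData A B F) : Prop where
  mod : IsRMod D.Md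
  sig_add : ∀ x y (m m' : D.Md.M x y), D.sig x y (m + m') = D.sig x y m + D.sig x y m'
  sig_smul : ∀ x y (c : k) (m : D.Md.M x y), D.sig x y (c • m) = c • D.sig x y m
  c1 : ∀ x y z (m : D.Md.M x y) (a : A.M y z),
    D.sig x z (D.Md.act m a) = dtRmul A B F D.Md a (D.sig x y m)
  c2 : ∀ x y (m : D.Md.M x y) (n : ℕ) (m0 : Fin n → D.Md.M x x) (m1 : Fin n → A.M x y),
    D.sig x y m = ∑ j, dtmk A B F D.Md x y (m0 j) (m1 j) →
    ∑ j, dt2mk A B F D.Md x y (D.sig x x (m0 j)) (m1 j)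
      = ∑ j, dt2mk A B F D.Md x y (dtmk A B F D.Md x x (m0 j) (A.one x)) (m1 j)
  c3 : ∀ x y (m : D.Md.M x y) (n : ℕ) (m0 : Fin n → D.Md.M x x) (m1 : Fin n → A.M x y),
    D.sig x y m = ∑ j, dtmk A B F D.Md x y (m0 j) (m1 j) →
    ∑ j, D.Md.act (m0 j) (m1 j) = m

/-- Morphisms of descent data. -/
structure IsDescHom (D D' : DescData A B F) (f : ∀ x y, D.Md.M x y → D'.Md.M x y) : Prop where
  mod : IsRModHom D.Md D'.Md f
  compat : ∀ x y (m : D.Md.M x y) (n : ℕ) (m0 : Fin n → D.Md.M x x) (m1 : Fin n → A.M x y),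
    D.sig x y m = ∑ j, dtmk A B F D.Md x y (m0 j) (m1 j) →
    D'.sig x y (f x y m) = ∑ j, dtmk A B F D'.Md x y (f x x (m0 j)) (m1 j)

/-- `G(M)_x = { m ∈ M_{xx} | σ_{xx}(m) = m ⊗ 1_x }`. -/
def Gset (D : DescData A B F) (x : X) : Set (D.Md.M x x) :=
  {m | D.sig x x m = dtmk A B F D.Md x x m (A.one x)}

/-- `N_x ⊗_{B_x} A_{xy}` for a diagonal right `B`-module `N`. -/
abbrev FTc (Nd : DModData B) (x y : X) : Type :=
  BT k (fun (n : Nd.N x) (b : B.C x) => Nd.ract n b)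
       (fun (b : B.C x) (a : A.M x y) => A.mul (F.i x b) a)

abbrev ftmk (Nd : DModData B) (x y : X) :
    Nd.N x →ₗ[k] A.M x y →ₗ[k] FTc A B F Nd x y :=
  btmk k _ _

/-- The right `A`-action `(n ⊗ a)·b := n ⊗ ab` on `F(N)`. -/
def ftRmul (Nd : DModData B) {x y z : X} (a : A.M y z) :
    FTc A B F Nd x y →ₗ[k] FTc A B F Nd x z :=
  btDesc k _ _ ((ftmk A B F Nd x z).compl₂ ((A.mulLin x y z).flip a)) (by
    intro m b a'
    simp only [LinearMap.compl₂_apply, LinearMap.flip_apply, KCat.mulLin_apply]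
    rw [A.mul_assoc]
    exact btmk_rel k _ _ m b (A.mul a' a))

@[simp] theorem ftRmul_mk (Nd : DModData B) {x y z : X} (a : A.M y z)
    (n : Nd.N x) (a' : A.M x y) :
    ftRmul A B F Nd a (ftmk A B F Nd x y n a') = ftmk A B F Nd x z n (A.mul a' a) := by
  simp [ftRmul]

/-- The right `A`-module `F(N)`. -/
def FNMod (Nd : DModData B) : RModData A where
  M := FTc A B F Nd
  act := fun {x y z} t a => ftRmul A B F Nd a t

@[simp] theorem FNMod_act (Nd : DModData B) {x y z : X} (t : FTc A B F Nd x y) (a : A.M y z) :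
    (FNMod A B F Nd).act t a = ftRmul A B F Nd a t := rfl

/-- `n ↦ n ⊗ 1_x` as a linear map `N_x → F(N)_{xx}`. -/
def etaLin (Nd : DModData B) (x : X) : Nd.N x →ₗ[k] FTc A B F Nd x x where
  toFun := fun n => ftmk A B F Nd x x n (A.one x)
  map_add' := by intro n n'; simp [map_add]
  map_smul' := by intro c n; simp [map_smul]

@[simp] theorem etaLin_apply (Nd : DModData B) (x : X) (n : Nd.N x) :
    etaLin A B F Nd x n = ftmk A B F Nd x x n (A.one x) := rfl

/-- The descent map `σ_{xy}(n ⊗ a) = (n ⊗ 1_x) ⊗ a` of `F(N)`. -/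
def FNsig (Nd : DModData B) (x y : X) :
    FTc A B F Nd x y →ₗ[k] DTc A B F (FNMod A B F Nd) x y :=
  btDesc k (fun (n : Nd.N x) (b : B.C x) => Nd.ract n b)
    (fun (b : B.C x) (a : A.M x y) => A.mul (F.i x b) a)
    ((dtmk A B F (FNMod A B F Nd) x y).comp (etaLin A B F Nd x)) (by
    intro n b a
    show (dtmk A B F (FNMod A B F Nd) x y) (ftmk A B F Nd x x (Nd.ract n b) (A.one x)) a
      = (dtmk A B F (FNMod A B F Nd) x y) (ftmk A B F Nd x x n (A.one x)) (A.mul (F.i x b) a)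
    rw [btmk_rel k _ _ n b (A.one x), A.mul_one]
    have h2 := btmk_rel k
      (fun (t : (FNMod A B F Nd).M x x) (b : B.C x) => (FNMod A B F Nd).act t (F.i x b))
      (fun (b : B.C x) (a : A.M x y) => A.mul (F.i x b) a)
      (ftmk A B F Nd x x n (A.one x)) b a
    rw [← h2]
    have h3 : (FNMod A B F Nd).act (ftmk A B F Nd x x n (A.one x)) (F.i x b)
        = ftmk A B F Nd x x n (F.i x b) := by
      show ftRmul A B F Nd (F.i x b) (ftmk A B F Nd x x n (A.one x)) = _
      rw [ftRmul_mk, A.one_mul]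
    rw [h3])

@[simp] theorem FNsig_mk (Nd : DModData B) (x y : X) (n : Nd.N x) (a : A.M x y) :
    FNsig A B F Nd x y (ftmk A B F Nd x y n a)
      = dtmk A B F (FNMod A B F Nd) x y (ftmk A B F Nd x x n (A.one x)) a := rfl

/-- The descent datum `F(N)`. -/
def FNDesc (Nd : DModData B) : DescData A B F where
  Md := FNMod A B F Nd
  sig := fun x y t => FNsig A B F Nd x y t

end Descent

section MapLeft

variable {X : Type}

/-- `g ⊗ id` on balanced tensor products. -/
def btMapLeft {S N N' Q : Type} [AddCommGroup N] [Module k N] [AddCommGroup N'] [Module k N']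
    [AddCommGroup Q] [Module k Q]
    (ρ : N → S → N) (ρ' : N' → S → N') (lam : S → Q → Q)
    (g : N →ₗ[k] N') (hg : ∀ n b, g (ρ n b) = ρ' (g n) b) :
    BT k ρ lam →ₗ[k] BT k ρ' lam :=
  btDesc k ρ lam ((btmk k ρ' lam).comp g) (by
    intro n b q
    simp only [LinearMap.comp_apply, hg]
    exact btmk_rel k ρ' lam (g n) b q)

@[simp] theorem btMapLeft_mk {S N N' Q : Type} [AddCommGroup N] [Module k N] [AddCommGroup N']
    [Module k N'] [AddCommGroup Q] [Module k Q]
    (ρ : N → S → N) (ρ' : N' → S → N') (lam : S → Q → Q)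
    (g : N →ₗ[k] N') (hg : ∀ n b, g (ρ n b) = ρ' (g n) b) (n : N) (q : Q) :
    btMapLeft ρ ρ' lam g hg (btmk k ρ lam n q) = btmk k ρ' lam (g n) q := by
  simp [btMapLeft]

end MapLeft

section Descent2

variable {X : Type} (A : KCat k X) (B : DiagAlg k X) (F : XFun B A)

/-- `F(g) = g ⊗ A` for a morphism `g` of diagonal modules. -/
def FNMap (Nd Nd' : DModData B) (g : ∀ x, Nd.N x →ₗ[k] Nd'.N x)
    (hg : ∀ x (n : Nd.N x) (b : B.C x), g x (Nd.ract n b) = Nd'.ract (g x n) b)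
    (x y : X) : FTc A B F Nd x y →ₗ[k] FTc A B F Nd' x y :=
  btMapLeft _ _ _ (g x) (hg x)

/-- `G(M)_x` as a `k`-submodule of `M_{xx}`. -/
def Gsub (D : DescData A B F) (hD : IsDesc A B F D) (x : X) :
    Submodule k (D.Md.M x x) where
  carrier := Gset A B F D x
  add_mem' := by
    intro a b ha hb
    simp only [Gset, Set.mem_setOf_eq] at *
    rw [hD.sig_add, ha, hb]
    simp [map_add]
  zero_mem' := by
    have h0 : D.sig x x (0 : D.Md.M x x) = 0 := by
      have := hD.sig_smul x x (0 : k) 0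
      simpa using this
    simp only [Gset, Set.mem_setOf_eq, h0, map_zero, LinearMap.zero_apply]
  smul_mem' := by
    intro c m hm
    simp only [Gset, Set.mem_setOf_eq] at *
    rw [hD.sig_smul, hm]
    simp [map_smul]

theorem Gsub_closed (D : DescData A B F) (hD : IsDesc A B F D) (x : X)
    (m : D.Md.M x x) (hm : m ∈ Gsub A B F D hD x) (b : B.C x) :
    D.Md.act m (F.i x b) ∈ Gsub A B F D hD x := by
  have hm' : D.sig x x m = dtmk A B F D.Md x x m (A.one x) := hm
  show D.sig x x (D.Md.act m (F.i x b)) = dtmk A B F D.Md x x (D.Md.act m (F.i x b)) (A.one x)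
  rw [hD.c1, hm', dtRmul_mk, A.one_mul]
  rw [btmk_rel k (fun (m : D.Md.M x x) (b : B.C x) => D.Md.act m (F.i x b))
      (fun (b : B.C x) (a : A.M x x) => A.mul (F.i x b) a) m b (A.one x), A.mul_one]

/-- `G(M)` as a diagonal right `B`-module. -/
def GMod (D : DescData A B F) (hD : IsDesc A B F D) : DModData B where
  N := fun x => ↥(Gsub A B F D hD x)
  ract := fun {x} m b => ⟨D.Md.act m.1 (F.i x b), Gsub_closed A B F D hD x m.1 m.2 b⟩

/-- The counit `ε^M : G(M)_x ⊗_{B_x} A_{xy} → M_{xy}`, `m ⊗ a ↦ ma`. -/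
def epsMap (D : DescData A B F) (hD : IsDesc A B F D) (x y : X) :
    FTc A B F (GMod A B F D hD) x y →ₗ[k] D.Md.M x y :=
  btDesc k
    (fun (m : ↥(Gsub A B F D hD x)) (b : B.C x) =>
      (⟨D.Md.act m.1 (F.i x b), Gsub_closed A B F D hD x m.1 m.2 b⟩ : ↥(Gsub A B F D hD x)))
    (fun (b : B.C x) (a : A.M x y) => A.mul (F.i x b) a)
    (LinearMap.mk₂ k (fun (m : ↥(Gsub A B F D hD x)) (a : A.M x y) => D.Md.act m.1 a)
      (by intro m m' a; exact hD.mod.add_act m.1 m'.1 a)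
      (by intro c m a; exact hD.mod.smul_act c m.1 a)
      (by intro m a a'; exact hD.mod.act_add m.1 a a')
      (by intro c m a; exact hD.mod.act_smul c m.1 a))
    (by intro m b a; exact hD.mod.act_assoc m.1 (F.i x b) a)

@[simp] theorem epsMap_mk (D : DescData A B F) (hD : IsDesc A B F D) (x y : X)
    (m : ↥(Gsub A B F D hD x)) (a : A.M x y) :
    epsMap A B F D hD x y (ftmk A B F (GMod A B F D hD) x y m a) = D.Md.act m.1 a := rfl

/-- The unit `η^N_x : N_x → F(N)_{xx}`, `n ↦ n ⊗ 1_x` (its corestriction to `GF(N)` is the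
unit of the adjunction). -/
def etaMap (Nd : DModData B) (x : X) : Nd.N x → FTc A B F Nd x x :=
  fun n => ftmk A B F Nd x x n (A.one x)

end Descent2

/-!
Every structure map is defined on the generators `n ⊗ a` of a balanced tensor product, so each
identity is checked on generators and extended by additivity. The descent axioms, phrased through
arbitrary representatives `σ(m) = ∑ m₀ ⊗ m₁`, follow from identities between linear maps out of
`M_{xx} ⊗_{B_x} A_{xy}` evaluated at `σ(m)`. For `F(N)` these hold because
`σ(n ⊗ a) = (n ⊗ 1) ⊗ a`; for the counit because `σ(m) = m ⊗ 1` on `G(M)`. The triangle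
identities reduce to `1_x a = a` and `m 1_x = m`.
-/

theorem BT.induction_on {S M N : Type} [AddCommGroup M] [Module k M] [AddCommGroup N]
    [Module k N] {ρ : M → S → M} {lam : S → N → N} {P : BT k ρ lam → Prop}
    (t : BT k ρ lam) (mk : ∀ m n, P (btmk k ρ lam m n))
    (add : ∀ t t', P t → P t' → P (t + t')) : P t := by
  obtain ⟨u, rfl⟩ := Submodule.mkQ_surjective _ t
  induction u using TensorProduct.induction_on with
  | zero => simpa using mk 0 0
  | tmul m n => exact mk m n
  | add u v hu hv => rw [map_add]; exact add _ _ hu hv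

section DescentData

variable {X : Type} (A : KCat k X) (B : DiagAlg k X) (F : XFun B A)

def dtMap {Md Md' : RModData A} {x : X} (φ : Md.M x x →ₗ[k] Md'.M x x)
    (hφ : ∀ m b, φ (Md.act m (F.i x b)) = Md'.act (φ m) (F.i x b)) (y : X) :
    DTc A B F Md x y →ₗ[k] DTc A B F Md' x y :=
  btMapLeft _ _ _ φ hφ

def sigTensor {Md : RModData A} {x : X} (σ : Md.M x x →ₗ[k] DTc A B F Md x x)
    (hσ : ∀ m b, σ (Md.act m (F.i x b)) = dtRmul A B F Md (F.i x b) (σ m)) (y : X) :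
    DTc A B F Md x y →ₗ[k] DT2c A B F Md x y :=
  btMapLeft _ _ _ σ hσ

@[simp] theorem sigTensor_mk {Md : RModData A} {x y : X} (σ : Md.M x x →ₗ[k] DTc A B F Md x x)
    (hσ : ∀ m b, σ (Md.act m (F.i x b)) = dtRmul A B F Md (F.i x b) (σ m))
    (m : Md.M x x) (a : A.M x y) :
    sigTensor A B F σ hσ y (dtmk A B F Md x y m a) = dt2mk A B F Md x y (σ m) a := rfl

def unitTensor (Md : RModData A) (x y : X) : DTc A B F Md x y →ₗ[k] DT2c A B F Md x y :=
  btMapLeft _ _ _ ((dtmk A B F Md x x).flip (A.one x)) (fun m b => by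
    simp only [LinearMap.flip_apply]
    rw [btmk_rel k (fun (m : Md.M x x) (b : B.C x) => Md.act m (F.i x b))
      (fun (b : B.C x) (a : A.M x x) => A.mul (F.i x b) a) m b (A.one x), dtRmul_mk,
      A.mul_one, A.one_mul])

@[simp] theorem unitTensor_mk (Md : RModData A) (x y : X) (m : Md.M x x) (a : A.M x y) :
    unitTensor A B F Md x y (dtmk A B F Md x y m a)
      = dt2mk A B F Md x y (dtmk A B F Md x x m (A.one x)) a := rfl

def actTensor {Md : RModData A} (hM : IsRMod Md) (x y : X) :
    DTc A B F Md x y →ₗ[k] Md.M x y :=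
  btDesc k _ _ (LinearMap.mk₂ k Md.act hM.add_act hM.smul_act hM.act_add hM.act_smul)
    (fun m b a => hM.act_assoc m (F.i x b) a)

@[simp] theorem actTensor_mk {Md : RModData A} (hM : IsRMod Md) (x y : X) (m : Md.M x x)
    (a : A.M x y) : actTensor A B F hM x y (dtmk A B F Md x y m a) = Md.act m a := rfl

theorem isDesc_of_linear (Md : RModData A) (hM : IsRMod Md)
    (σ : ∀ x y, Md.M x y →ₗ[k] DTc A B F Md x y)
    (hσ : ∀ x y z (m : Md.M x y) (a : A.M y z),
      σ x z (Md.act m a) = dtRmul A B F Md a (σ x y m))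
    (coassoc : ∀ x y (m : Md.M x y),
      sigTensor A B F (σ x x) (fun m b => hσ x x x m (F.i x b)) y (σ x y m)
        = unitTensor A B F Md x y (σ x y m))
    (counit : ∀ x y (m : Md.M x y), actTensor A B F hM x y (σ x y m) = m) :
    IsDesc A B F ⟨Md, fun x y m => σ x y m⟩ where
  mod := hM
  sig_add x y := map_add (σ x y)
  sig_smul x y := map_smul (σ x y)
  c1 := hσ
  c2 x y m n m0 m1 (h : σ x y m = _) := by
    simpa only [h, map_sum, sigTensor_mk, unitTensor_mk] using coassoc x y m
  c3 x y m n m0 m1 (h : σ x y m = _) := by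
    simpa only [h, map_sum, actTensor_mk] using counit x y m

theorem isDescHom_of_linear (D D' : DescData A B F) (φ : ∀ x y, D.Md.M x y →ₗ[k] D'.Md.M x y)
    (hφ : ∀ x y z (m : D.Md.M x y) (a : A.M y z), φ x z (D.Md.act m a) = D'.Md.act (φ x y m) a)
    (hσ : ∀ x y (m : D.Md.M x y),
      dtMap A B F (φ x x) (fun m b => hφ x x x m (F.i x b)) y (D.sig x y m)
        = D'.sig x y (φ x y m)) :
    IsDescHom A B F D D' (fun x y m => φ x y m) where
  mod := ⟨fun x y => map_add (φ x y), fun x y => map_smul (φ x y), hφ⟩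
  compat x y m n m0 m1 h := by
    rw [← hσ, h, map_sum]
    rfl

end DescentData

section FreeDescent

variable {X : Type} (A : KCat k X) (B : DiagAlg k X) (F : XFun B A) (Nd : DModData B)

theorem ftRmul_add {x y z : X} (a a' : A.M y z) (t : FTc A B F Nd x y) :
    ftRmul A B F Nd (a + a') t = ftRmul A B F Nd a t + ftRmul A B F Nd a' t := by
  induction t using BT.induction_on with
  | mk n b => simp [A.mul_add]
  | add t t' ht ht' => simp only [map_add, ht, ht']; abel

theorem ftRmul_smul {x y z : X} (c : k) (a : A.M y z) (t : FTc A B F Nd x y) :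
    ftRmul A B F Nd (c • a) t = c • ftRmul A B F Nd a t := by
  induction t using BT.induction_on with
  | mk n b => simp [A.mul_smul]
  | add t t' ht ht' => simp only [map_add, ht, ht', smul_add]

theorem ftRmul_ftRmul {x y z w : X} (a : A.M y z) (b : A.M z w) (t : FTc A B F Nd x y) :
    ftRmul A B F Nd b (ftRmul A B F Nd a t) = ftRmul A B F Nd (A.mul a b) t := by
  induction t using BT.induction_on with
  | mk n a' => simp [A.mul_assoc]
  | add t t' ht ht' => simp only [map_add, ht, ht']

theorem ftRmul_one {x y : X} (t : FTc A B F Nd x y) : ftRmul A B F Nd (A.one y) t = t := by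
  induction t using BT.induction_on with
  | mk n a => simp [A.mul_one]
  | add t t' ht ht' => simp only [map_add, ht, ht']

theorem isRMod_FNMod : IsRMod (FNMod A B F Nd) where
  add_act m m' a := map_add (ftRmul A B F Nd a) m m'
  act_add m a a' := ftRmul_add A B F Nd a a' m
  smul_act c m a := map_smul (ftRmul A B F Nd a) c m
  act_smul c m a := ftRmul_smul A B F Nd c a m
  act_assoc m a b := ftRmul_ftRmul A B F Nd a b m
  act_one m := ftRmul_one A B F Nd m

theorem FNsig_ftRmul {x y z : X} (a : A.M y z) (t : FTc A B F Nd x y) :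
    FNsig A B F Nd x z (ftRmul A B F Nd a t)
      = dtRmul A B F (FNMod A B F Nd) a (FNsig A B F Nd x y t) := by
  induction t using BT.induction_on with
  | mk n a' =>
    simp only [ftRmul_mk, FNsig_mk]
    exact (dtRmul_mk A B F (FNMod A B F Nd) a _ a').symm
  | add t t' ht ht' => simp only [map_add, ht, ht']

theorem sigTensor_FNsig (x y : X) (t : FTc A B F Nd x y) :
    sigTensor A B F (FNsig A B F Nd x x) (fun t b => FNsig_ftRmul A B F Nd (F.i x b) t) y
      (FNsig A B F Nd x y t) = unitTensor A B F (FNMod A B F Nd) x y (FNsig A B F Nd x y t) := by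
  induction t using BT.induction_on with
  | mk n a => rfl
  | add t t' ht ht' => simp only [map_add, ht, ht']

theorem actTensor_FNsig (x y : X) (t : FTc A B F Nd x y) :
    actTensor A B F (isRMod_FNMod A B F Nd) x y (FNsig A B F Nd x y t) = t := by
  induction t using BT.induction_on with
  | mk n a =>
    show ftRmul A B F Nd a (ftmk A B F Nd x x n (A.one x)) = _
    rw [ftRmul_mk, A.one_mul]
  | add t t' ht ht' => rw [map_add, map_add, ht, ht']; rfl

theorem isDesc_FNDesc : IsDesc A B F (FNDesc A B F Nd) :=
  isDesc_of_linear A B F (FNMod A B F Nd) (isRMod_FNMod A B F Nd) (FNsig A B F Nd)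
    (fun _ _ _ t a => FNsig_ftRmul A B F Nd a t) (sigTensor_FNsig A B F Nd)
    (actTensor_FNsig A B F Nd)

variable (Nd' : DModData B) (g : ∀ x, Nd.N x →ₗ[k] Nd'.N x)
  (hg : ∀ x (n : Nd.N x) (b : B.C x), g x (Nd.ract n b) = Nd'.ract (g x n) b)

@[simp] theorem FNMap_mk {x y : X} (n : Nd.N x) (a : A.M x y) :
    FNMap A B F Nd Nd' g hg x y (ftmk A B F Nd x y n a) = ftmk A B F Nd' x y (g x n) a := rfl

theorem FNMap_ftRmul {x y z : X} (a : A.M y z) (t : FTc A B F Nd x y) :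
    FNMap A B F Nd Nd' g hg x z (ftRmul A B F Nd a t)
      = ftRmul A B F Nd' a (FNMap A B F Nd Nd' g hg x y t) := by
  induction t using BT.induction_on with
  | mk n a' => simp only [ftRmul_mk, FNMap_mk]
  | add t t' ht ht' => simp only [map_add, ht, ht']

theorem dtMap_FNMap_FNsig (x y : X) (t : FTc A B F Nd x y) :
    dtMap A B F (FNMap A B F Nd Nd' g hg x x)
        (fun t b => FNMap_ftRmul A B F Nd Nd' g hg (F.i x b) t) y (FNsig A B F Nd x y t)
      = FNsig A B F Nd' x y (FNMap A B F Nd Nd' g hg x y t) := by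
  induction t using BT.induction_on with
  | mk n a => rfl
  | add t t' ht ht' => simp only [map_add, ht, ht']

theorem isDescHom_FNMap :
    IsDescHom A B F (FNDesc A B F Nd) (FNDesc A B F Nd')
      (fun x y t => FNMap A B F Nd Nd' g hg x y t) :=
  isDescHom_of_linear A B F (FNDesc A B F Nd) (FNDesc A B F Nd') (FNMap A B F Nd Nd' g hg)
    (fun _ _ _ t a => FNMap_ftRmul A B F Nd Nd' g hg a t) (dtMap_FNMap_FNsig A B F Nd Nd' g hg)

end FreeDescent

section Adjunction

variable {X : Type} (A : KCat k X) (B : DiagAlg k X) (F : XFun B A)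

theorem IsDescHom.map_mem_Gset {D D' : DescData A B F} {f : ∀ x y, D.Md.M x y → D'.Md.M x y}
    (hf : IsDescHom A B F D D' f) {x : X} {m : D.Md.M x x} (hm : m ∈ Gset A B F D x) :
    f x x m ∈ Gset A B F D' x := by
  have h := hf.compat x x m 1 (fun _ => m) (fun _ => A.one x) (by rw [Fin.sum_univ_one]; exact hm)
  rwa [Fin.sum_univ_one] at h

theorem etaMap_mem_Gset (Nd : DModData B) (x : X) (n : Nd.N x) :
    etaMap A B F Nd x n ∈ Gset A B F (FNDesc A B F Nd) x :=
  FNsig_mk A B F Nd x x n (A.one x)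

theorem etaMap_ract (Nd : DModData B) (x : X) (n : Nd.N x) (b : B.C x) :
    etaMap A B F Nd x (Nd.ract n b) = ftRmul A B F Nd (F.i x b) (etaMap A B F Nd x n) := by
  rw [etaMap, etaMap, ftRmul_mk, A.one_mul, btmk_rel, A.mul_one]

theorem ftRmul_etaMap (Nd : DModData B) {x y : X} (n : Nd.N x) (a : A.M x y) :
    ftRmul A B F Nd a (etaMap A B F Nd x n) = ftmk A B F Nd x y n a := by
  rw [etaMap, ftRmul_mk, A.one_mul]

variable (D : DescData A B F) (hD : IsDesc A B F D)

theorem epsMap_ftRmul {x y z : X} (a : A.M y z) (t : FTc A B F (GMod A B F D hD) x y) :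
    epsMap A B F D hD x z (ftRmul A B F (GMod A B F D hD) a t)
      = D.Md.act (epsMap A B F D hD x y t) a := by
  induction t using BT.induction_on with
  | mk m a' => rw [ftRmul_mk]; exact (hD.mod.act_assoc m.1 a' a).symm
  | add t t' ht ht' => simp only [map_add, hD.mod.add_act, ht, ht']

-- On `G(M)` we have `σ(m) = m ⊗ 1`, hence `σ(ma) = (m ⊗ 1)a = m ⊗ a`.
theorem dtMap_epsMap_FNsig (x y : X) (t : FTc A B F (GMod A B F D hD) x y) :
    dtMap A B F (epsMap A B F D hD x x) (fun t b => epsMap_ftRmul A B F D hD (F.i x b) t) y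
      (FNsig A B F (GMod A B F D hD) x y t) = D.sig x y (epsMap A B F D hD x y t) := by
  induction t using BT.induction_on with
  | mk m a =>
    have hm : D.sig x x m.1 = dtmk A B F D.Md x x m.1 (A.one x) := m.2
    show dtmk A B F D.Md x y (D.Md.act m.1 (A.one x)) a = D.sig x y (D.Md.act m.1 a)
    rw [hD.c1, hm, dtRmul_mk, A.one_mul, hD.mod.act_one]
  | add t t' ht ht' => simp only [map_add, ht, ht', hD.sig_add]

theorem isDescHom_epsMap :
    IsDescHom A B F (FNDesc A B F (GMod A B F D hD)) D (fun x y t => epsMap A B F D hD x y t) :=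
  isDescHom_of_linear A B F (FNDesc A B F (GMod A B F D hD)) D (epsMap A B F D hD)
    (fun _ _ _ t a => epsMap_ftRmul A B F D hD a t) (dtMap_epsMap_FNsig A B F D hD)

end Adjunction

/-- Proposition 2.2: for a `k`-linear `X`-functor `i : B → A` from a
diagonal `k`-linear category `B` to a `k`-linear category `A`, the formulas
`F(N)_{xy} = N_x ⊗_{B_x} A_{xy}` (with `(n ⊗ a)b = n ⊗ ab`, `σ(n ⊗ a) = n ⊗ 1_x ⊗ a`),
`G(M)_x = {m ∈ M_{xx} | σ_{xx} m = m ⊗ 1_x}`, unit `η(n) = n ⊗ 1_x` and counit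
`ε(m ⊗ a) = ma` yield an adjoint pair of functors between `D_k(X)_B` and `Desc_B(A)`. -/
theorem stmt0 {k X : Type} [CommRing k] (A : KCat k X) (B : DiagAlg k X) (F : XFun B A) :
    -- F is well defined on objects: F(N) is a descent datum
    (∀ (Nd : DModData B), IsDMod Nd → IsDesc A B F (FNDesc A B F Nd))
    ∧
    -- F is well defined on morphisms
    (∀ (Nd Nd' : DModData B), IsDMod Nd → IsDMod Nd' →
      ∀ (g : ∀ x, Nd.N x →ₗ[k] Nd'.N x)
        (hg : ∀ x (n : Nd.N x) (b : B.C x), g x (Nd.ract n b) = Nd'.ract (g x n) b),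
      IsDescHom A B F (FNDesc A B F Nd) (FNDesc A B F Nd')
        (fun x y t => FNMap A B F Nd Nd' g hg x y t))
    ∧
    -- G is well defined on objects: G(M)_x is closed under the right B_x-action
    (∀ (D : DescData A B F), IsDesc A B F D →
      ∀ x (m : D.Md.M x x), m ∈ Gset A B F D x →
        ∀ b : B.C x, D.Md.act m (F.i x b) ∈ Gset A B F D x)
    ∧
    -- G is well defined on morphisms
    (∀ (D D' : DescData A B F), IsDesc A B F D → IsDesc A B F D' →
      ∀ (f : ∀ x y, D.Md.M x y → D'.Md.M x y), IsDescHom A B F D D' f →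
      ∀ x (m : D.Md.M x x), m ∈ Gset A B F D x → f x x m ∈ Gset A B F D' x)
    ∧
    -- the unit lands in GF(N)
    (∀ (Nd : DModData B), IsDMod Nd →
      ∀ x (n : Nd.N x), etaMap A B F Nd x n ∈ Gset A B F (FNDesc A B F Nd) x)
    ∧
    -- the unit is right B-linear
    (∀ (Nd : DModData B), IsDMod Nd → ∀ x (n : Nd.N x) (b : B.C x),
      etaMap A B F Nd x (Nd.ract n b)
        = (FNMod A B F Nd).act (etaMap A B F Nd x n) (F.i x b))
    ∧
    -- naturality of the unit
    (∀ (Nd Nd' : DModData B), IsDMod Nd → IsDMod Nd' →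
      ∀ (g : ∀ x, Nd.N x →ₗ[k] Nd'.N x)
        (hg : ∀ x (n : Nd.N x) (b : B.C x), g x (Nd.ract n b) = Nd'.ract (g x n) b),
      ∀ x (n : Nd.N x),
        FNMap A B F Nd Nd' g hg x x (etaMap A B F Nd x n) = etaMap A B F Nd' x (g x n))
    ∧
    -- the counit is a morphism of descent data  FG(M) → M
    (∀ (D : DescData A B F) (hD : IsDesc A B F D),
      IsDescHom A B F (FNDesc A B F (GMod A B F D hD)) D
        (fun x y t => epsMap A B F D hD x y t))
    ∧
    -- naturality of the counit
    (∀ (D D' : DescData A B F) (hD : IsDesc A B F D) (hD' : IsDesc A B F D')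
      (f : ∀ x y, D.Md.M x y → D'.Md.M x y), IsDescHom A B F D D' f →
      ∀ x y (m : ↥(Gsub A B F D hD x)) (hm' : f x x m.1 ∈ Gsub A B F D' hD' x) (a : A.M x y),
        f x y (epsMap A B F D hD x y (ftmk A B F (GMod A B F D hD) x y m a))
          = epsMap A B F D' hD' x y (ftmk A B F (GMod A B F D' hD') x y ⟨f x x m.1, hm'⟩ a))
    ∧
    -- first triangle identity:  ε_{F(N)} ∘ F(η^N) = id_{F(N)}
    (∀ (Nd : DModData B), IsDMod Nd → ∀ (hFN : IsDesc A B F (FNDesc A B F Nd))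
      (x y : X) (n : Nd.N x) (a : A.M x y)
      (hmem : etaMap A B F Nd x n ∈ Gsub A B F (FNDesc A B F Nd) hFN x),
      epsMap A B F (FNDesc A B F Nd) hFN x y
        (ftmk A B F (GMod A B F (FNDesc A B F Nd) hFN) x y ⟨etaMap A B F Nd x n, hmem⟩ a)
        = ftmk A B F Nd x y n a)
    ∧
    -- second triangle identity:  G(ε^M) ∘ η^{G(M)} = id_{G(M)}
    (∀ (D : DescData A B F) (hD : IsDesc A B F D) (x : X) (m : ↥(Gsub A B F D hD x)),
      epsMap A B F D hD x x (ftmk A B F (GMod A B F D hD) x x m (A.one x)) = m.1) := by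
  refine ⟨fun Nd _ => isDesc_FNDesc A B F Nd,
    fun Nd Nd' _ _ g hg => isDescHom_FNMap A B F Nd Nd' g hg,
    fun D hD => Gsub_closed A B F D hD,
    fun _ _ _ _ _ hf _ _ hm => hf.map_mem_Gset A B F hm,
    fun Nd _ => etaMap_mem_Gset A B F Nd,
    fun Nd _ => etaMap_ract A B F Nd,
    fun Nd Nd' _ _ g hg x n => FNMap_mk A B F Nd Nd' g hg n (A.one x),
    isDescHom_epsMap A B F,
    fun _ _ _ _ _ hf x y m _ a => hf.mod.map_act x x y m.1 a,
    fun Nd _ _ _ _ n a _ => ftRmul_etaMap A B F Nd n a,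
    fun _ hD _ m => hD.mod.act_one m.1⟩

end Paper
end
end

section
/- Let i : B → A be a k-linear X-functor from a diagonal k-linear category B to a k-linear category A. Fix x, y ∈ X and assume that A_{xy} is flat as a left B_x-module. Then for every descent datum (M, σ) for i, the counit map ε^M_{xy} : G(M)_x ⊗_{B_x} A_{xy} → M_{xy}, m ⊗ a ↦ ma, is bijective, where G(M)_x = {m ∈ M_{xx} | σ_{xx}(m) = m ⊗_{B_x} 1_x}; its inverse is the corestriction of σ_{xy} to G(M)_x ⊗_{B_x} A_{xy}. -/
open TensorProduct BigOperators
noncomputable section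
namespace Paper
variable (k : Type) [CommRing k]

variable {k}
variable (k)
variable {k}

section Flat

variable {X : Type} (B : DiagAlg k X)

/-- The axioms of a right module over the `k`-algebra `B_x`. -/
def IsRModOver (x : X) (N : Type) [AddCommGroup N] [Module k N] (ρ : N → B.C x → N) : Prop :=
  (∀ n n' b, ρ (n + n') b = ρ n b + ρ n' b) ∧
  (∀ n b b', ρ n (b + b') = ρ n b + ρ n b') ∧
  (∀ (c : k) n b, ρ (c • n) b = c • ρ n b) ∧
  (∀ (c : k) n b, ρ n (c • b) = c • ρ n b) ∧
  (∀ n b b', ρ (ρ n b) b' = ρ n (B.mul b b')) ∧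
  (∀ n, ρ n (B.one x) = n)

/-- `Q` (with left `B_x`-action `lam`) is flat as a left `B_x`-module:  `- ⊗_{B_x} Q`
preserves injectivity of morphisms of right `B_x`-modules. -/
def LeftFlat (x : X) (Q : Type) [AddCommGroup Q] [Module k Q] (lam : B.C x → Q → Q) : Prop :=
  ∀ (N N' : Type) [AddCommGroup N] [Module k N] [AddCommGroup N'] [Module k N']
    (ρ : N → B.C x → N) (ρ' : N' → B.C x → N'),
    IsRModOver B x N ρ → IsRModOver B x N' ρ' →
    ∀ (g : N →ₗ[k] N') (hg : ∀ n b, g (ρ n b) = ρ' (g n) b),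
      Function.Injective g → Function.Injective (btMapLeft ρ ρ' lam g hg)

/-- `Q` is faithfully flat as a left `B_x`-module: it is flat, and `N ⊗_{B_x} Q = 0`
forces `N = 0`. -/
def LeftFaithfullyFlat (x : X) (Q : Type) [AddCommGroup Q] [Module k Q]
    (lam : B.C x → Q → Q) : Prop :=
  LeftFlat B x Q lam ∧
  ∀ (N : Type) [AddCommGroup N] [Module k N] (ρ : N → B.C x → N), IsRModOver B x N ρ →
    (∀ t : BT k ρ lam, t = 0) → ∀ n : N, n = 0

end Flat

section Incl

variable {X : Type} (A : KCat k X) (B : DiagAlg k X) (F : XFun B A)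

/-- The inclusion `G(M)_x ⊗_{B_x} A_{xy} → M_{xx} ⊗_{B_x} A_{xy}`. -/
def inclMap (D : DescData A B F) (hD : IsDesc A B F D) (x y : X) :
    FTc A B F (GMod A B F D hD) x y →ₗ[k] DTc A B F D.Md x y :=
  btMapLeft (fun (m : (GMod A B F D hD).N x) (b : B.C x) => (GMod A B F D hD).ract m b)
    (fun (m : D.Md.M x x) (b : B.C x) => D.Md.act m (F.i x b))
    (fun (b : B.C x) (a : A.M x y) => A.mul (F.i x b) a)
    (Gsub A B F D hD x).subtype (fun n b => rfl)

end Incl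

/-! `G(M)_x` is the kernel of the `B_x`-linear map `d = σ_{xx} - (- ⊗ 1_x) : M_{xx} → M_{xx} ⊗ A_{xx}`.
Flatness of `A_{xy}` keeps `0 → G(M)_x ⊗ A_{xy} → M_{xx} ⊗ A_{xy} → M_{xx} ⊗ A_{xx} ⊗ A_{xy}` exact,
and the coassociativity of `σ` says that `σ_{xy}` lands in the kernel of `d ⊗ A_{xy}`, hence in
`G(M)_x ⊗ A_{xy}`. The counit condition makes `σ_{xy}` injective, and `σ_{xy} ∘ ε` is the inclusion
by the `A`-linearity of `σ`; so `ε` is injective and, by the above, surjective. -/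

section BalancedTensor

variable {S M N Q V : Type} [AddCommGroup M] [Module k M] [AddCommGroup N] [Module k N]
  [AddCommGroup Q] [Module k Q] [AddCommGroup V] [Module k V]

theorem bt_ext {ρ : M → S → M} {lam : S → N → N} {f g : BT k ρ lam →ₗ[k] V}
    (h : ∀ m n, f (btmk k ρ lam m n) = g (btmk k ρ lam m n)) : f = g :=
  Submodule.linearMap_qext _ (TensorProduct.ext' h)

theorem bt_exists_eq_sum (ρ : M → S → M) (lam : S → N → N) (t : BT k ρ lam) :
    ∃ (n : ℕ) (m0 : Fin n → M) (m1 : Fin n → N), t = ∑ j, btmk k ρ lam (m0 j) (m1 j) := by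
  obtain ⟨s, rfl⟩ := (relSub k ρ lam).mkQ_surjective t
  induction s using TensorProduct.induction_on with
  | zero => exact ⟨0, Fin.elim0, Fin.elim0, by simp⟩
  | tmul m n => exact ⟨1, fun _ => m, fun _ => n, (Fin.sum_univ_one (fun _ => btmk k ρ lam m n)).symm⟩
  | add s s' hs hs' =>
    obtain ⟨n, m0, m1, h⟩ := hs
    obtain ⟨n', m0', m1', h'⟩ := hs'
    refine ⟨n + n', Fin.append m0 m0', Fin.append m1 m1', ?_⟩
    rw [Fin.sum_univ_add, map_add, h, h']
    simp only [Fin.append_left, Fin.append_right]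

/-- Right exactness of `- ⊗_S Q`. -/
theorem mem_range_of_btMapLeft_mkQ_eq_zero (ρ : S → M →ₗ[k] M) (lam : S → Q → Q)
    (P : Submodule k M) (hP : ∀ b, P ≤ P.comap (ρ b)) {t : BT k (fun m b => ρ b m) lam}
    (ht : btMapLeft (fun m b => ρ b m) (fun q b => P.mapQ P (ρ b) (hP b) q) lam P.mkQ
      (fun _ _ => rfl) t = 0) :
    t ∈ LinearMap.range (btMapLeft (fun (n : P) b => ⟨ρ b n, hP b n.2⟩) (fun m b => ρ b m) lam
      P.subtype (fun _ _ => rfl)) := by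
  set R := LinearMap.range (btMapLeft (fun (n : P) b => ⟨ρ b n, hP b n.2⟩)
    (fun m b => ρ b m) lam P.subtype (fun _ _ => rfl))
  -- `ψ` induces `φ : (M/P) ⊗ Q → (M ⊗ Q)/R` with `φ ∘ (q ⊗ id)` the quotient map
  -- (`hφ`), so the kernel of `q ⊗ id` lies in `R`
  let ψ : (M ⧸ P) →ₗ[k] Q →ₗ[k] (BT k (fun m b => ρ b m) lam ⧸ R) :=
    P.liftQ ((btmk k _ lam).compr₂ R.mkQ) fun m hm => by
      ext a
      exact (Submodule.Quotient.mk_eq_zero R).2 ⟨btmk k _ lam ⟨m, hm⟩ a, btMapLeft_mk ..⟩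
  have hψ : ∀ q b a, ψ (P.mapQ P (ρ b) (hP b) q) a = ψ q (lam b a) := by
    intro q b a
    obtain ⟨m, rfl⟩ := P.mkQ_surjective q
    exact congrArg R.mkQ (btmk_rel k (fun m b => ρ b m) lam m b a)
  have hφ : (btDesc k _ lam ψ hψ).comp
      (btMapLeft _ _ lam P.mkQ (fun _ _ => rfl)) = R.mkQ :=
    bt_ext fun m a => rfl
  rw [← Submodule.Quotient.mk_eq_zero, ← Submodule.mkQ_apply, ← hφ, LinearMap.comp_apply, ht,
    map_zero]

end BalancedTensor

section RightModule

variable {X : Type} {B : DiagAlg k X} {x : X} {N N' Q : Type} [AddCommGroup N] [Module k N]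
  [AddCommGroup N'] [Module k N'] [AddCommGroup Q] [Module k Q]
  {ρ : N → B.C x → N} {ρ' : N' → B.C x → N'}

def IsRModOver.actLin (hN : IsRModOver B x N ρ) (b : B.C x) : N →ₗ[k] N where
  toFun n := ρ n b
  map_add' n n' := hN.1 n n' b
  map_smul' c n := hN.2.2.1 c n b

theorem IsRModOver.submodule (hN : IsRModOver B x N ρ) (P : Submodule k N)
    (hP : ∀ b, P ≤ P.comap (hN.actLin b)) :
    IsRModOver B x P (fun n b => ⟨ρ n b, hP b n.2⟩) := by
  obtain ⟨h1, h2, h3, h4, h5, h6⟩ := hN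
  exact ⟨fun n n' b => Subtype.ext (h1 n n' b), fun n b b' => Subtype.ext (h2 n b b'),
    fun c n b => Subtype.ext (h3 c n b), fun c n b => Subtype.ext (h4 c n b),
    fun n b b' => Subtype.ext (h5 n b b'), fun n => Subtype.ext (h6 n)⟩

theorem IsRModOver.quotient (hN : IsRModOver B x N ρ) (P : Submodule k N)
    (hP : ∀ b, P ≤ P.comap (hN.actLin b)) :
    IsRModOver B x (N ⧸ P) (fun q b => P.mapQ P (hN.actLin b) (hP b) q) := by
  obtain ⟨-, h2, -, h4, h5, h6⟩ := id hN
  refine ⟨fun q q' b => map_add _ q q', ?_, fun c q b => map_smul _ c q, ?_, ?_, ?_⟩ <;>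
    intros <;>
    obtain ⟨m, rfl⟩ := P.mkQ_surjective ‹N ⧸ P› <;>
    simp only [Submodule.mkQ_apply, Submodule.mapQ_apply, IsRModOver.actLin,
      LinearMap.coe_mk, AddHom.coe_mk, h2, h4, h5, h6, Submodule.Quotient.mk_add,
      Submodule.Quotient.mk_smul]

/-- Flatness keeps `0 → P → N → N'` exact at `N` after applying `- ⊗_{B_x} Q`. -/
theorem LeftFlat.mem_range_of_btMapLeft_eq_zero {lam : B.C x → Q → Q} (hQ : LeftFlat B x Q lam)
    (hN : IsRModOver B x N ρ) (hN' : IsRModOver B x N' ρ') (d : N →ₗ[k] N')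
    (hd : ∀ n b, d (ρ n b) = ρ' (d n) b) (P : Submodule k N)
    (hP : ∀ b, P ≤ P.comap (hN.actLin b)) (hPd : ∀ n, n ∈ P ↔ d n = 0) {t : BT k ρ lam}
    (ht : btMapLeft ρ ρ' lam d hd t = 0) :
    t ∈ LinearMap.range (btMapLeft (fun (n : P) b => ⟨ρ n b, hP b n.2⟩) ρ lam P.subtype
      (fun _ _ => rfl)) := by
  let dbar : (N ⧸ P) →ₗ[k] N' := P.liftQ d fun n hn => (hPd n).1 hn
  have hdbar : ∀ q b, dbar (P.mapQ P (hN.actLin b) (hP b) q) = ρ' (dbar q) b := by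
    intro q b
    obtain ⟨n, rfl⟩ := P.mkQ_surjective q
    exact hd n b
  have hdbar_inj : Function.Injective dbar := by
    rw [← LinearMap.ker_eq_bot]
    exact Submodule.ker_liftQ_eq_bot _ _ _ fun n hn => (hPd n).2 hn
  have hfactor : (btMapLeft _ ρ' lam dbar hdbar).comp
      (btMapLeft ρ (fun q b => P.mapQ P (hN.actLin b) (hP b) q) lam P.mkQ (fun _ _ => rfl))
        = btMapLeft ρ ρ' lam d hd :=
    bt_ext fun n a => rfl
  refine mem_range_of_btMapLeft_mkQ_eq_zero hN.actLin lam P hP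
    (hQ _ _ _ _ (hN.quotient P hP) hN' dbar hdbar hdbar_inj ?_)
  rw [map_zero]
  exact (DFunLike.congr_fun hfactor t).trans ht

end RightModule

section Descent

variable {X : Type} {A : KCat k X} {B : DiagAlg k X} {F : XFun B A}

theorem IsRMod.isRModOver {Md : RModData A} (hM : IsRMod Md) (F : XFun B A) (x : X) :
    IsRModOver B x (Md.M x x) (fun m b => Md.act m (F.i x b)) :=
  ⟨fun m m' b => hM.add_act m m' _,
    fun m b b' => by simp only [map_add, hM.act_add],
    fun c m b => hM.smul_act c m _,
    fun c m b => by simp only [map_smul, hM.act_smul],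
    fun m b b' => by simp only [hM.act_assoc, F.i_mul],
    fun m => by simp only [F.i_one, hM.act_one]⟩

theorem dtRmul_add (Md : RModData A) {x y z : X} (a a' : A.M y z) (t : DTc A B F Md x y) :
    dtRmul A B F Md (a + a') t = dtRmul A B F Md a t + dtRmul A B F Md a' t :=
  DFunLike.congr_fun (bt_ext (g := dtRmul A B F Md a + dtRmul A B F Md a') fun m n => by
    simp [A.mul_add]) t

theorem dtRmul_smul (Md : RModData A) {x y z : X} (c : k) (a : A.M y z)
    (t : DTc A B F Md x y) : dtRmul A B F Md (c • a) t = c • dtRmul A B F Md a t :=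
  DFunLike.congr_fun (bt_ext (g := c • dtRmul A B F Md a) fun m n => by
    simp [A.mul_smul]) t

theorem dtRmul_dtRmul (Md : RModData A) {x y z w : X} (a : A.M y z) (a' : A.M z w)
    (t : DTc A B F Md x y) :
    dtRmul A B F Md a' (dtRmul A B F Md a t) = dtRmul A B F Md (A.mul a a') t :=
  DFunLike.congr_fun (bt_ext (f := (dtRmul A B F Md a').comp (dtRmul A B F Md a))
    fun m n => by simp [A.mul_assoc]) t

theorem dtRmul_one (Md : RModData A) {x y : X} (t : DTc A B F Md x y) :
    dtRmul A B F Md (A.one y) t = t :=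
  DFunLike.congr_fun (bt_ext (g := LinearMap.id) fun m n => by simp [A.mul_one]) t

theorem isRModOver_dtRmul (Md : RModData A) (x : X) :
    IsRModOver B x (DTc A B F Md x x) (fun t b => dtRmul A B F Md (F.i x b) t) :=
  ⟨fun t t' b => map_add _ t t',
    fun t b b' => by simp only [map_add, dtRmul_add],
    fun c t b => map_smul _ c t,
    fun c t b => by simp only [map_smul, dtRmul_smul],
    fun t b b' => by simp only [dtRmul_dtRmul, F.i_mul],
    fun t => by simp only [F.i_one, dtRmul_one]⟩

variable {D : DescData A B F}

def sigDiff (hD : IsDesc A B F D) (x : X) : D.Md.M x x →ₗ[k] DTc A B F D.Md x x where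
  toFun m := D.sig x x m - dtmk A B F D.Md x x m (A.one x)
  map_add' m m' := by rw [hD.sig_add, map_add, LinearMap.add_apply]; abel
  map_smul' c m := by rw [hD.sig_smul, map_smul, LinearMap.smul_apply, smul_sub]; rfl

theorem sigDiff_act (hD : IsDesc A B F D) (x : X) (m : D.Md.M x x) (b : B.C x) :
    sigDiff hD x (D.Md.act m (F.i x b)) = dtRmul A B F D.Md (F.i x b) (sigDiff hD x m) := by
  simp only [sigDiff, LinearMap.coe_mk, AddHom.coe_mk, hD.c1, map_sub, dtRmul_mk, A.one_mul]
  rw [btmk_rel k (fun (m : D.Md.M x x) (b : B.C x) => D.Md.act m (F.i x b)) _ m b, A.mul_one]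

theorem mem_Gsub_iff_sigDiff_eq_zero (hD : IsDesc A B F D) (x : X) (m : D.Md.M x x) :
    m ∈ Gsub A B F D hD x ↔ sigDiff hD x m = 0 :=
  sub_eq_zero.symm

theorem btMapLeft_sigDiff_sig (hD : IsDesc A B F D) (x y : X) (m : D.Md.M x y) :
    btMapLeft (fun m b => D.Md.act m (F.i x b)) (fun t b => dtRmul A B F D.Md (F.i x b) t)
      (fun b a => A.mul (F.i x b) a) (sigDiff hD x) (sigDiff_act hD x) (D.sig x y m) = 0 := by
  obtain ⟨n, m0, m1, hm⟩ := bt_exists_eq_sum _ _ (D.sig x y m)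
  rw [hm, map_sum, ← sub_eq_zero.2 (hD.c2 x y m n m0 m1 hm), ← Finset.sum_sub_distrib]
  refine Finset.sum_congr rfl fun j _ => ?_
  rw [btMapLeft_mk]
  simp only [sigDiff, LinearMap.coe_mk, AddHom.coe_mk, map_sub, LinearMap.sub_apply]

def dtAct {Md : RModData A} (hM : IsRMod Md) (x y : X) : DTc A B F Md x y →ₗ[k] Md.M x y :=
  btDesc k _ _ (LinearMap.mk₂ k Md.act hM.add_act hM.smul_act hM.act_add hM.act_smul)
    fun m b a => hM.act_assoc m (F.i x b) a

theorem sig_leftInverse (hD : IsDesc A B F D) (x y : X) :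
    Function.LeftInverse (dtAct hD.mod x y) (D.sig x y) := by
  intro m
  obtain ⟨n, m0, m1, hm⟩ := bt_exists_eq_sum _ _ (D.sig x y m)
  rw [hm, map_sum, ← hD.c3 x y m n m0 m1 hm]
  rfl

theorem sig_epsMap (hD : IsDesc A B F D) (x y : X) (t : FTc A B F (GMod A B F D hD) x y) :
    D.sig x y (epsMap A B F D hD x y t) = inclMap A B F D hD x y t := by
  let σε : FTc A B F (GMod A B F D hD) x y →ₗ[k] DTc A B F D.Md x y :=
    { toFun := fun t => D.sig x y (epsMap A B F D hD x y t)
      map_add' := fun t t' => by rw [map_add, hD.sig_add]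
      map_smul' := fun c t => by rw [map_smul, hD.sig_smul]; rfl }
  refine DFunLike.congr_fun (bt_ext (f := σε) fun g a => ?_) t
  have hg : D.sig x x g.1 = dtmk A B F D.Md x x g.1 (A.one x) := g.2
  show D.sig x y (D.Md.act g.1 a) = dtmk A B F D.Md x y g.1 a
  rw [hD.c1, hg, dtRmul_mk, A.one_mul]

theorem inclMap_injective (hD : IsDesc A B F D) (x y : X)
    (hflat : LeftFlat B x (A.M x y) (fun (b : B.C x) (a : A.M x y) => A.mul (F.i x b) a)) :
    Function.Injective (inclMap A B F D hD x y) :=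
  hflat _ _ _ _ ((hD.mod.isRModOver F x).submodule (Gsub A B F D hD x)
      fun b m hm => Gsub_closed A B F D hD x m hm b)
    (hD.mod.isRModOver F x) _ _ Subtype.val_injective

theorem sig_mem_range_inclMap (hD : IsDesc A B F D) (x y : X)
    (hflat : LeftFlat B x (A.M x y) (fun (b : B.C x) (a : A.M x y) => A.mul (F.i x b) a))
    (m : D.Md.M x y) : D.sig x y m ∈ LinearMap.range (inclMap A B F D hD x y) :=
  hflat.mem_range_of_btMapLeft_eq_zero (hD.mod.isRModOver F x) (isRModOver_dtRmul D.Md x)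
    (sigDiff hD x) (sigDiff_act hD x) (Gsub A B F D hD x)
    (fun b m hm => Gsub_closed A B F D hD x m hm b)
    (mem_Gsub_iff_sigDiff_eq_zero hD x) (btMapLeft_sigDiff_sig hD x y m)

end Descent

/-- Proposition 2.3: if `A_{xy}` is flat as a left `B_x`-module, then for
every descent datum `(M, σ)` the counit `ε^M_{xy} : G(M)_x ⊗_{B_x} A_{xy} → M_{xy}`,
`m ⊗ a ↦ ma`, is bijective, and its inverse is the corestriction of `σ_{xy}`, i.e.
`σ_{xy} ∘ ε^M_{xy}` is the canonical inclusion `G(M)_x ⊗_{B_x} A_{xy} → M_{xx} ⊗_{B_x} A_{xy}`. -/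
theorem stmt1 {k X : Type} [CommRing k] (A : KCat k X) (B : DiagAlg k X) (F : XFun B A)
    (x y : X)
    (hflat : LeftFlat B x (A.M x y) (fun (b : B.C x) (a : A.M x y) => A.mul (F.i x b) a))
    (D : DescData A B F) (hD : IsDesc A B F D) :
    Function.Bijective (epsMap A B F D hD x y) ∧
    ∀ t : FTc A B F (GMod A B F D hD) x y,
      D.sig x y (epsMap A B F D hD x y t) = inclMap A B F D hD x y t := by
  have hσε := sig_epsMap hD x y
  refine ⟨⟨fun t t' h => inclMap_injective hD x y hflat ?_, fun m => ?_⟩, hσε⟩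
  · rw [← hσε, ← hσε, h]
  · obtain ⟨t, ht⟩ := sig_mem_range_inclMap hD x y hflat m
    exact ⟨t, (sig_leftInverse hD x y).injective (by rw [hσε, ht])⟩

end Paper
end
end
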